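/- arXiv:1305.7002 — 4 statements merged into one kernel-verified Lean document; each statement's English description precedes it below -/
import Mathlib

section
/- Let A and B be positive self-adjoint operators such that the form sum A+B is densely defined. Then for every positive integer n, the form sum A^{1/2^n} + B^{1/2^n} is densely defined and (A+B)^{1/2^n} ≥ 2^{-1+2^{-n}} (A^{1/2^n} + B^{1/2^n}) in the form sense. -/
/-!
Operator concavity of `t ↦ t ^ p` for `p ∈ [0, 1]` gives
`((a + b) / 2) ^ p ≥ (a ^ p + b ^ p) / 2`, and homogeneity `(r • a) ^ p = r ^ p • a ^ p` turns this
into `(a + b) ^ p ≥ 2 ^ (p - 1) • (a ^ p + b ^ p)`; the exponent `p = 2⁻ⁿ` is one instance.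
-/

open scoped InnerProductSpace

namespace CFC

variable {A : Type*} [CStarAlgebra A] [PartialOrder A] [StarOrderedRing A]

lemma smul_rpow {r : ℝ} (hr : 0 ≤ r) {a : A} (ha : 0 ≤ a) {p : ℝ} (hp : 0 ≤ p) :
    (r • a) ^ p = r ^ p • a ^ p := by
  have hcont : Continuous (fun x : ℝ => x ^ p) := Real.continuous_rpow_const hp
  rw [rpow_eq_cfc_real (smul_nonneg hr ha), rpow_eq_cfc_real ha,
    ← cfc_comp_const_mul r _ a hcont.continuousOn, ← cfc_const_mul _ _ a hcont.continuousOn]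
  refine cfc_congr fun x hx => ?_
  exact Real.mul_rpow hr (spectrum_nonneg_of_nonneg ha hx)

lemma two_rpow_sub_one_smul_add_rpow_le {p : ℝ} (hp : p ∈ Set.Icc 0 1) {a b : A}
    (ha : 0 ≤ a) (hb : 0 ≤ b) :
    (2 : ℝ) ^ (p - 1) • (a ^ p + b ^ p) ≤ (a + b) ^ p := by
  have hmid := (concaveOn_rpow hp).2 (Set.mem_Ici.2 ha) (Set.mem_Ici.2 hb)
    (by norm_num : (0 : ℝ) ≤ 2⁻¹) (by norm_num : (0 : ℝ) ≤ 2⁻¹) (by norm_num)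
  dsimp only at hmid
  rw [← smul_add, ← smul_add, smul_rpow (by norm_num) (add_nonneg ha hb) hp.1] at hmid
  have hconst : (2 : ℝ) ^ (p - 1) = 2 ^ p * 2⁻¹ := by
    rw [Real.rpow_sub_one two_ne_zero, div_eq_mul_inv]
  calc (2 : ℝ) ^ (p - 1) • (a ^ p + b ^ p) = (2 : ℝ) ^ p • 2⁻¹ • (a ^ p + b ^ p) := by
        rw [hconst, mul_smul]
    _ ≤ (2 : ℝ) ^ p • (2⁻¹ : ℝ) ^ p • (a + b) ^ p :=
        smul_le_smul_of_nonneg_left hmid (by positivity)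
    _ = (a + b) ^ p := by
        rw [smul_smul, ← Real.mul_rpow (by norm_num) (by norm_num)]
        norm_num

end CFC

namespace ContinuousLinearMap

variable {𝕜 E : Type*} [RCLike 𝕜] [NormedAddCommGroup E] [InnerProductSpace 𝕜 E]

lemma re_inner_le_re_inner_of_le {S T : E →L[𝕜] E} (h : S ≤ T) (x : E) :
    RCLike.re ⟪S x, x⟫_𝕜 ≤ RCLike.re ⟪T x, x⟫_𝕜 := by
  have := ((le_def S T).mp h).re_inner_nonneg_left x
  rwa [sub_apply, inner_sub_left, map_sub, sub_nonneg] at this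

end ContinuousLinearMap

theorem statement1_general {H : Type*} [NormedAddCommGroup H] [InnerProductSpace ℂ H]
    [CompleteSpace H] (A B : H →L[ℂ] H) (hA : IsSelfAdjoint A) (hB : IsSelfAdjoint B)
    (hApos : ∀ x : H, 0 ≤ (⟪A x, x⟫_ℂ).re)
    (hBpos : ∀ x : H, 0 ≤ (⟪B x, x⟫_ℂ).re)
    (n : ℕ) :
    ∀ x : H,
      (2:ℝ) ^ (-1 + (2:ℝ) ^ (-(n:ℝ))) *
        ((⟪cfc (fun t : ℝ => t ^ ((1:ℝ) / 2 ^ n)) A x, x⟫_ℂ).re +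
         (⟪cfc (fun t : ℝ => t ^ ((1:ℝ) / 2 ^ n)) B x, x⟫_ℂ).re) ≤
      (⟪cfc (fun t : ℝ => t ^ ((1:ℝ) / 2 ^ n)) (A + B) x, x⟫_ℂ).re := by
  intro x
  have hA0 : 0 ≤ A := (ContinuousLinearMap.nonneg_iff_isPositive A).mpr ⟨hA.isSymmetric, hApos⟩
  have hB0 : 0 ≤ B := (ContinuousLinearMap.nonneg_iff_isPositive B).mpr ⟨hB.isSymmetric, hBpos⟩
  have hp : (1 : ℝ) / 2 ^ n ∈ Set.Icc 0 1 :=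
    ⟨by positivity, div_le_one_of_le₀ (one_le_pow₀ one_le_two) (by positivity)⟩
  have hexp : (1 : ℝ) / 2 ^ n - 1 = -1 + 2 ^ (-(n : ℝ)) := by
    rw [Real.rpow_neg two_pos.le, Real.rpow_natCast, one_div]
    ring
  have key := ContinuousLinearMap.re_inner_le_re_inner_of_le
    (CFC.two_rpow_sub_one_smul_add_rpow_le hp hA0 hB0) x
  rwa [CFC.rpow_eq_cfc_real hA0, CFC.rpow_eq_cfc_real hB0,
    CFC.rpow_eq_cfc_real (add_nonneg hA0 hB0), hexp, smul_apply,
    add_apply, RCLike.real_smul_eq_coe_smul (K := ℂ), inner_smul_real_left,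
    RCLike.smul_re, inner_add_left, map_add] at key

/-- For positive self-adjoint operators `A`, `B`, one has
`(A+B)^{1/2^n} ≥ 2^{-1+2^{-n}} (A^{1/2^n} + B^{1/2^n})` in the form sense,
for every positive integer `n`. -/
theorem statement1 {H : Type*} [NormedAddCommGroup H] [InnerProductSpace ℂ H]
    [CompleteSpace H] (A B : H →L[ℂ] H) (hA : IsSelfAdjoint A) (hB : IsSelfAdjoint B)
    (hApos : ∀ x : H, 0 ≤ (⟪A x, x⟫_ℂ).re)
    (hBpos : ∀ x : H, 0 ≤ (⟪B x, x⟫_ℂ).re)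
    (n : ℕ) (hn : 1 ≤ n) :
    ∀ x : H,
      (2:ℝ) ^ (-1 + (2:ℝ) ^ (-(n:ℝ))) *
        ((⟪cfc (fun t : ℝ => t ^ ((1:ℝ) / 2 ^ n)) A x, x⟫_ℂ).re +
         (⟪cfc (fun t : ℝ => t ^ ((1:ℝ) / 2 ^ n)) B x, x⟫_ℂ).re) ≤
      (⟪cfc (fun t : ℝ => t ^ ((1:ℝ) / 2 ^ n)) (A + B) x, x⟫_ℂ).re :=
  statement1_general A B hA hB hApos hBpos n
end

section
/- Let S be a self-adjoint submarkovian semigroup on L_2 with kernel K satisfying ‖1_A S_t 1_A‖_{1→∞} ≤ V(t)^{-1} for all t > 0, where V is positive increasing and doubling with doubling dimension D̃. Then for each integer N > D̃ there is a_N > 0 with ‖1_A (I + t² H)^{-N} 1_A‖_{1→∞} ≤ a_N V(t²)^{-1} for all t > 0, where H is the generator of S. -/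
/-!
Bound `n (s t²)` against `V (t²)⁻¹` pointwise: for `s ≥ 1` monotonicity of `V` gives the factor
`1`, for `s < 1` doubling gives the factor `a s^{-D}`. The Laplace weight `s^{N-1} e^{-s}` times
`1 + a s^{-D}` is a sum of two Gamma integrands, integrable at `0` exactly because `D < N`.
-/

open MeasureTheory Real Set Nat

lemma integrableOn_rpow_mul_exp_neg {p : ℝ} (hp : -1 < p) :
    IntegrableOn (fun x : ℝ => x ^ p * exp (-x)) (Ioi 0) := by
  simpa using integrableOn_rpow_mul_exp_neg_rpow hp one_pos

lemma integrableOn_pow_mul_exp_neg_mul_one_add_rpow_neg (k : ℕ) (a : ℝ) {D : ℝ}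
    (hD : D < k + 1) :
    IntegrableOn (fun s : ℝ => s ^ k * exp (-s) * (1 + a * s ^ (-D))) (Ioi 0) := by
  have hk : (-1 : ℝ) < k := by linarith [k.cast_nonneg (α := ℝ)]
  refine ((integrableOn_rpow_mul_exp_neg hk).add
    ((integrableOn_rpow_mul_exp_neg (p := k - D) (by linarith)).const_mul a)).congr_fun
    (fun s (hs : 0 < s) => ?_) measurableSet_Ioi
  simp only [Pi.add_apply, rpow_natCast, rpow_sub hs, rpow_neg hs.le]
  ring

section DoublingFunction

variable {V : ℝ → ℝ} {a D : ℝ}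

lemma inv_le_mul_rpow_neg_mul_inv_of_doubling (hVpos : ∀ t > 0, 0 < V t)
    (hVdoub : ∀ s t : ℝ, 0 < t → t ≤ s → V s ≤ a * (s / t) ^ D * V t)
    {r u : ℝ} (hr0 : 0 < r) (hr1 : r ≤ 1) (hu : 0 < u) :
    (V (r * u))⁻¹ ≤ a * r ^ (-D) * (V u)⁻¹ := by
  have hru : 0 < r * u := mul_pos hr0 hu
  have h := hVdoub u (r * u) hru (mul_le_of_le_one_left hu.le hr1)
  rw [div_mul_cancel_right₀ hu.ne', inv_rpow hr0.le, ← rpow_neg hr0.le] at h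
  rw [← div_eq_mul_inv, le_div_iff₀ (hVpos u hu), inv_mul_le_iff₀ (hVpos _ hru)]
  linarith

lemma inv_le_one_add_mul_rpow_neg_mul_inv (ha : 0 ≤ a) (hVpos : ∀ t > 0, 0 < V t)
    (hVmono : ∀ s t : ℝ, 0 < t → t ≤ s → V t ≤ V s)
    (hVdoub : ∀ s t : ℝ, 0 < t → t ≤ s → V s ≤ a * (s / t) ^ D * V t)
    {s u : ℝ} (hs : 0 < s) (hu : 0 < u) :
    (V (s * u))⁻¹ ≤ (1 + a * s ^ (-D)) * (V u)⁻¹ := by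
  have hVu : 0 ≤ (V u)⁻¹ := (inv_pos.2 (hVpos u hu)).le
  have hsD : 0 ≤ a * s ^ (-D) := by positivity
  rcases le_total 1 s with hs1 | hs1
  · calc (V (s * u))⁻¹ ≤ (V u)⁻¹ :=
          inv_anti₀ (hVpos u hu) (hVmono _ _ hu (le_mul_of_one_le_left hu.le hs1))
      _ ≤ (1 + a * s ^ (-D)) * (V u)⁻¹ := le_mul_of_one_le_left hVu (by linarith)
  · calc (V (s * u))⁻¹ ≤ a * s ^ (-D) * (V u)⁻¹ :=
          inv_le_mul_rpow_neg_mul_inv_of_doubling hVpos hVdoub hs hs1 hu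
      _ ≤ (1 + a * s ^ (-D)) * (V u)⁻¹ := by gcongr; linarith

end DoublingFunction

theorem statement8_general (V n m : ℝ → ℝ) (a D : ℝ) (ha : 0 < a)
    (hVpos : ∀ t > (0:ℝ), 0 < V t)
    (hVmono : ∀ s t : ℝ, 0 < t → t ≤ s → V t ≤ V s)
    (hVdoub : ∀ s t : ℝ, 0 < t → t ≤ s → V s ≤ a * (s / t) ^ D * V t)
    (hn0 : ∀ t > (0:ℝ), 0 ≤ n t)
    (hn : ∀ t > (0:ℝ), n t ≤ (V t)⁻¹)
    (N : ℕ) (hN : D < N)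
    (hm : ∀ t > (0:ℝ), m t ≤ ((Nat.factorial (N - 1) : ℝ))⁻¹ *
      ∫ s in Set.Ioi (0:ℝ), s ^ (N - 1 : ℕ) * Real.exp (-s) * n (s * t ^ 2)) :
    ∃ aN > (0:ℝ), ∀ t > (0:ℝ), m t ≤ aN * (V (t ^ 2))⁻¹ := by
  set k := N - 1
  have hk : D < k + 1 := hN.trans_le (by norm_cast; omega)
  set C := ∫ s in Ioi 0, s ^ k * exp (-s) * (1 + a * s ^ (-D))
  have hC : 0 ≤ C := setIntegral_nonneg measurableSet_Ioi fun s (hs : 0 < s) => by positivity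
  refine ⟨1 + (k ! : ℝ)⁻¹ * C, by positivity, fun t ht => ?_⟩
  have hu : 0 < t ^ 2 := by positivity
  have hVu : 0 ≤ (V (t ^ 2))⁻¹ := (inv_pos.2 (hVpos _ hu)).le
  have hnC : ∫ s in Ioi 0, s ^ k * exp (-s) * n (s * t ^ 2) ≤ C * (V (t ^ 2))⁻¹ := by
    rw [← integral_mul_const]
    refine integral_mono_of_nonneg ?_
      ((integrableOn_pow_mul_exp_neg_mul_one_add_rpow_neg k a hk).mul_const _) ?_
    all_goals filter_upwards [ae_restrict_mem measurableSet_Ioi] with s (hs : 0 < s)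
    · have := hn0 _ (mul_pos hs hu)
      positivity
    · have hnV := (hn _ (mul_pos hs hu)).trans
        (inv_le_one_add_mul_rpow_neg_mul_inv ha.le hVpos hVmono hVdoub hs hu)
      exact (mul_le_mul_of_nonneg_left hnV (by positivity)).trans_eq (by ring)
  calc m t ≤ (k ! : ℝ)⁻¹ * ∫ s in Ioi 0, s ^ k * exp (-s) * n (s * t ^ 2) := hm t ht
    _ ≤ (k ! : ℝ)⁻¹ * C * (V (t ^ 2))⁻¹ := by rw [mul_assoc]; gcongr
    _ ≤ (1 + (k ! : ℝ)⁻¹ * C) * (V (t ^ 2))⁻¹ := by gcongr; linarith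

/-- If `n t = ‖1_A S_t 1_A‖_{1→∞}` satisfies `n t ≤ V(t)⁻¹` with `V` positive increasing
and doubling with doubling dimension `D̃`, and if `m t = ‖1_A (I+t²H)^{-N} 1_A‖_{1→∞}`
satisfies the Laplace transform representation bound
`m t ≤ ((N-1)!)⁻¹ ∫₀^∞ s^{N-1} e^{-s} n(st²) ds`, then for each integer `N > D̃` there is
`a_N > 0` with `m t ≤ a_N V(t²)⁻¹` for all `t > 0`. -/
theorem statement8 (V n m : ℝ → ℝ) (a D : ℝ) (ha : 0 < a) (hD : 0 < D)
    (hVpos : ∀ t > (0:ℝ), 0 < V t)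
    (hVmono : ∀ s t : ℝ, 0 < t → t ≤ s → V t ≤ V s)
    (hVdoub : ∀ s t : ℝ, 0 < t → t ≤ s → V s ≤ a * (s / t) ^ D * V t)
    (hn0 : ∀ t > (0:ℝ), 0 ≤ n t)
    (hn : ∀ t > (0:ℝ), n t ≤ (V t)⁻¹)
    (N : ℕ) (hN : D < N)
    (hm : ∀ t > (0:ℝ), m t ≤ ((Nat.factorial (N - 1) : ℝ))⁻¹ *
      ∫ s in Set.Ioi (0:ℝ), s ^ (N - 1 : ℕ) * Real.exp (-s) * n (s * t ^ 2)) :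
    ∃ aN > (0:ℝ), ∀ t > (0:ℝ), m t ≤ aN * (V (t ^ 2))⁻¹ :=
  statement8_general V n m a D ha hVpos hVmono hVdoub hn0 hn N hN hm
end

section
/- Let D be a set of real continuous functions on a metric space (or on ℝ^d) closed under the operations ψ ↦ −ψ + c (c ∈ ℝ), and under finite maxima and minima. For x,y define d(x;y) = sup_{ψ∈D}(ψ(x) − ψ(y)) and for sets A, B set d(A;B) = inf_{x∈A, y∈B} d(x;y) and d̂(A;B) = sup_{ψ∈D} inf_{x∈A,y∈B}(ψ(x) − ψ(y)). If A and B are compact subsets, then d̂(A;B) = d(A;B). -/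
/-!
Let `t < d(A;B)`. Each pair `x ∈ A`, `y ∈ B` is separated by some `ψ ∈ D` normalised to
`ψ y = 0` with `ψ x > t`. For fixed `y` the normalised functions form a max-closed family, so the
open sets `{ψ > t}` form a directed cover of the compact `A` and one `φ_y` with `φ_y y = 0` and
`φ_y > t` on `A` suffices. The functions of `D` exceeding `t` on `A` form a min-closed family, so
the sets `{φ_y < ε}` form a codirected cover of `B`, giving a single `ψ ∈ D` with `ψ > t` on `A` and
`ψ < ε` on `B`; hence `d̂(A;B) ≥ t - ε`.
-/

section Compactness

variable {X α : Type*} [TopologicalSpace X] [LinearOrder α] [TopologicalSpace α]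
  [OrderClosedTopology α] {K : Set X} {S : Set (X → α)} {a : α}

theorem IsCompact.exists_mem_forall_lt_of_directedOn (hK : IsCompact K) (hKne : K.Nonempty)
    (hS : DirectedOn (· ≤ ·) S) (hcont : ∀ φ ∈ S, Continuous φ)
    (h : ∀ x ∈ K, ∃ φ ∈ S, a < φ x) : ∃ φ ∈ S, ∀ x ∈ K, a < φ x := by
  obtain ⟨φ₀, hφ₀, -⟩ := h _ hKne.some_mem
  have : Nonempty S := ⟨⟨φ₀, hφ₀⟩⟩
  obtain ⟨⟨φ, hφ⟩, hKφ⟩ := hK.elim_directed_cover (fun φ : S => {x | a < φ.1 x})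
    (fun φ => isOpen_lt continuous_const (hcont φ.1 φ.2))
    (fun x hx => by simpa using h x hx)
    (hS.directed_val.mono_comp (g := fun φ => {x | a < φ x}) _
      fun φ ψ hle x (hx : a < φ x) => hx.trans_le (hle x))
  exact ⟨φ, hφ, hKφ⟩

theorem IsCompact.exists_mem_forall_gt_of_codirectedOn (hK : IsCompact K) (hKne : K.Nonempty)
    (hS : DirectedOn (· ≥ ·) S) (hcont : ∀ φ ∈ S, Continuous φ)
    (h : ∀ x ∈ K, ∃ φ ∈ S, φ x < a) : ∃ φ ∈ S, ∀ x ∈ K, φ x < a :=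
  hK.exists_mem_forall_lt_of_directedOn (α := αᵒᵈ) hKne hS hcont h

end Compactness

section

variable {X : Type*} [TopologicalSpace X] {D : Set (X → ℝ)} {A B : Set X}

theorem exists_mem_apply_eq_zero_forall_lt (hcont : ∀ ψ ∈ D, Continuous ψ)
    (hneg : ∀ ψ ∈ D, ∀ c : ℝ, (fun x => -ψ x + c) ∈ D) (hsup : SupClosed D)
    (hA : IsCompact A) (hAne : A.Nonempty) {y : X} {t : ℝ}
    (h : ∀ x ∈ A, ∃ ψ ∈ D, t < ψ x - ψ y) : ∃ φ ∈ D, φ y = 0 ∧ ∀ x ∈ A, t < φ x := by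
  have hS : SupClosed (D ∩ {φ | φ y = 0}) :=
    hsup.inter fun φ hφ ψ hψ => by simp_all
  have hsub : ∀ ψ ∈ D, (fun x => ψ x - ψ y) ∈ D := fun ψ hψ => by
    simpa [sub_eq_add_neg] using hneg _ (hneg ψ hψ 0) (-ψ y)
  obtain ⟨φ, ⟨hφD, hφy⟩, hφA⟩ := hA.exists_mem_forall_lt_of_directedOn hAne hS.directedOn
    (fun φ hφ => hcont φ hφ.1) fun x hx => by
      obtain ⟨ψ, hψ, hlt⟩ := h x hx
      exact ⟨_, ⟨hsub ψ hψ, sub_self _⟩, hlt⟩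
  exact ⟨φ, hφD, hφy, hφA⟩

theorem exists_mem_forall_lt_sub (hcont : ∀ ψ ∈ D, Continuous ψ)
    (hneg : ∀ ψ ∈ D, ∀ c : ℝ, (fun x => -ψ x + c) ∈ D) (hsup : SupClosed D)
    (hinf : InfClosed D) (hA : IsCompact A) (hB : IsCompact B) (hAne : A.Nonempty)
    (hBne : B.Nonempty) {r t : ℝ} (hrt : r < t)
    (h : ∀ x ∈ A, ∀ y ∈ B, ∃ ψ ∈ D, t < ψ x - ψ y) :
    ∃ ψ ∈ D, ∀ x ∈ A, ∀ y ∈ B, r < ψ x - ψ y := by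
  have hS : InfClosed (D ∩ {φ | ∀ x ∈ A, t < φ x}) :=
    hinf.inter fun φ hφ ψ hψ x hx => lt_min (hφ x hx) (hψ x hx)
  obtain ⟨ψ, ⟨hψD, hψA⟩, hψB⟩ := hB.exists_mem_forall_gt_of_codirectedOn hBne
    hS.codirectedOn (fun φ hφ => hcont φ hφ.1) (a := t - r) fun y hy => by
      obtain ⟨φ, hφD, hφy, hφA⟩ :=
        exists_mem_apply_eq_zero_forall_lt hcont hneg hsup hA hAne (h · · y hy)
      exact ⟨φ, ⟨hφD, hφA⟩, by linarith⟩
  exact ⟨ψ, hψD, fun x hx y hy => by linarith [hψA x hx, hψB y hy]⟩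

end

/-- Let `D` be a family of continuous real functions on a metric space, closed under
`ψ ↦ -ψ + c`, finite maxima and finite minima. Define `d(x;y) = sup_{ψ∈D}(ψx - ψy)`,
`d(A;B) = inf_{x∈A,y∈B} d(x;y)` and `d̂(A;B) = sup_{ψ∈D} inf_{x∈A,y∈B}(ψx - ψy)`.
Then `d̂(A;B) = d(A;B)` for nonempty compact `A`, `B`. -/
theorem statement9 {X : Type*} [MetricSpace X] (D : Set (X → ℝ))
    (hcont : ∀ ψ ∈ D, Continuous ψ)
    (hneg : ∀ ψ ∈ D, ∀ c : ℝ, (fun x => -ψ x + c) ∈ D)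
    (hmax : ∀ ψ₁ ∈ D, ∀ ψ₂ ∈ D, (fun x => max (ψ₁ x) (ψ₂ x)) ∈ D)
    (hmin : ∀ ψ₁ ∈ D, ∀ ψ₂ ∈ D, (fun x => min (ψ₁ x) (ψ₂ x)) ∈ D)
    (A B : Set X) (hA : IsCompact A) (hB : IsCompact B)
    (hAne : A.Nonempty) (hBne : B.Nonempty) :
    (⨆ ψ ∈ D, ⨅ x ∈ A, ⨅ y ∈ B, ((ψ x - ψ y : ℝ) : EReal)) =
      ⨅ x ∈ A, ⨅ y ∈ B, ⨆ ψ ∈ D, ((ψ x - ψ y : ℝ) : EReal) := by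
  refine le_antisymm (iSup₂_le fun ψ hψ => le_iInf₂ fun x hx => le_iInf₂ fun y hy => ?_) ?_
  · exact (iInf₂_le_of_le x hx (iInf₂_le y hy)).trans (le_iSup₂_of_le ψ hψ le_rfl)
  refine EReal.ge_of_forall_gt_iff_ge.mp fun r hr => ?_
  obtain ⟨t, hrt, ht⟩ := EReal.exists_between_coe_real hr
  have hpt : ∀ x ∈ A, ∀ y ∈ B, ∃ ψ ∈ D, t < ψ x - ψ y := fun x hx y hy => by
    simpa only [lt_iSup_iff, EReal.coe_lt_coe_iff, exists_prop] using ht.trans_le (iInf₂_le_of_le x hx (iInf₂_le y hy))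
  obtain ⟨ψ, hψD, hψ⟩ := exists_mem_forall_lt_sub hcont hneg (fun _ h₁ _ h₂ => hmax _ h₁ _ h₂)
    (fun _ h₁ _ h₂ => hmin _ h₁ _ h₂) hA hB hAne hBne (EReal.coe_lt_coe_iff.mp hrt) hpt
  exact le_iSup₂_of_le ψ hψD <| le_iInf₂ fun x hx => le_iInf₂ fun y hy =>
    EReal.coe_le_coe_iff.mpr (hψ x hx y hy).le
end

section
/- Let H₁, H₂ be positive self-adjoint operators on L₂, A a measurable set, and ρ > 0 such that 1_A cos(tH₁^{1/2}) 1_A = 1_A cos(tH₂^{1/2}) 1_A for all |t| ≤ ρ. Then 1_A cos(2tH₁^{1/2}) 1_A = 1_A cos(2tH₂^{1/2}) 1_A for all |t| ≤ ρ, provided additionally cos(tH_i^{1/2})φ_A is the same function for both operators for each φ_A ∈ L₂(A) and |t| ≤ ρ. Consequently, for every even bounded Borel function Ψ with Fourier transform supported in [−2ρ, 2ρ], 1_A Ψ(H₁^{1/2}) 1_A = 1_A Ψ(H₂^{1/2}) 1_A. -/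
/-!
With `C = cos(t√H)`, the identity `cos 2θ = 2 cos² θ - 1` gives `P cos(2t√H) P = 2 P C² P - P²`.
Since `P` and `C` are self-adjoint, `C₁ P = C₂ P` implies `P C₁ = P C₂` by taking adjoints, hence
`P C₁² P = (P C₁)(C₁ P) = (P C₂)(C₂ P) = P C₂² P`. For the multiplier, `Ψ(√H)` is the integral over
`|t| ≤ 2ρ` of `Ψ̃(t) cos(t√H)`; the functional calculus and the compression by `P` both commute with
this integral, and the compressed integrands agree by the doubling step applied at `t / 2`.
-/

open scoped InnerProductSpace
open MeasureTheory Set Function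

lemma mul_mul_self_mul_eq_of_mul_eq {R : Type*} [Semigroup R] [StarMul R] {P C₁ C₂ : R}
    (hP : IsSelfAdjoint P) (hC₁ : IsSelfAdjoint C₁) (hC₂ : IsSelfAdjoint C₂)
    (h : C₁ * P = C₂ * P) : P * (C₁ * C₁) * P = P * (C₂ * C₂) * P := by
  have h' : P * C₁ = P * C₂ := by
    simpa only [star_mul, hP.star_eq, hC₁.star_eq, hC₂.star_eq] using congr_arg star h
  calc P * (C₁ * C₁) * P = P * C₁ * (C₁ * P) := by simp only [mul_assoc]
    _ = P * C₂ * (C₂ * P) := by rw [h, h']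
    _ = P * (C₂ * C₂) * P := by simp only [mul_assoc]

section CStarAlgebra

variable {A : Type*} [CStarAlgebra A]

lemma cfc_cos_two_mul {a : A} {g : ℝ → ℝ} (hg : ContinuousOn g (spectrum ℝ a))
    (ha : IsSelfAdjoint a) :
    cfc (fun x => Real.cos (2 * g x)) a =
      (2 : ℝ) • (cfc (fun x => Real.cos (g x)) a * cfc (fun x => Real.cos (g x)) a) - 1 := by
  simp only [Real.cos_two_mul, sq]
  rw [cfc_sub _ _ a, cfc_const_mul _ _ a, cfc_mul _ _ a, cfc_const_one ℝ a]

lemma mul_cfc_cos_two_mul_mul_eq {a b P : A} (ha : IsSelfAdjoint a) (hb : IsSelfAdjoint b)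
    (hP : IsSelfAdjoint P) {g : ℝ → ℝ} (hg : Continuous g)
    (h : cfc (fun x => Real.cos (g x)) a * P = cfc (fun x => Real.cos (g x)) b * P) :
    P * cfc (fun x => Real.cos (2 * g x)) a * P = P * cfc (fun x => Real.cos (2 * g x)) b * P := by
  have expand (C : A) : P * ((2 : ℝ) • (C * C) - 1) * P = (2 : ℝ) • (P * (C * C) * P) - P * P := by
    simp only [mul_sub, sub_mul, mul_one, mul_smul_comm, smul_mul_assoc]
  rw [cfc_cos_two_mul hg.continuousOn ha, cfc_cos_two_mul hg.continuousOn hb, expand, expand,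
    mul_mul_self_mul_eq_of_mul_eq hP (cfc_predicate _ a) (cfc_predicate _ b) h]

lemma exists_bound_uncurry_Icc_spectrum (a : A) {f : ℝ → ℝ → ℝ} (hf : Continuous (uncurry f))
    (α β : ℝ) : ∃ M, ∀ t ∈ Icc α β, ∀ x ∈ spectrum ℝ a, ‖f t x‖ ≤ M := by
  obtain ⟨M, hM⟩ := (isCompact_Icc.prod (spectrum.isCompact a)).exists_bound_of_continuousOn
    hf.continuousOn
  exact ⟨M, fun t ht x hx => hM (t, x) ⟨ht, hx⟩⟩

lemma intervalIntegrable_cfc {a : A} (ha : IsSelfAdjoint a) {f : ℝ → ℝ → ℝ}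
    (hf : Continuous (uncurry f)) {α β : ℝ} (hαβ : α ≤ β) :
    IntervalIntegrable (fun t => cfc (f t) a) volume α β := by
  obtain ⟨M, hM⟩ := exists_bound_uncurry_Icc_spectrum a hf α β
  rw [intervalIntegrable_iff_integrableOn_Ioc_of_le hαβ]
  exact integrableOn_cfc measurableSet_Ioc f (fun _ => M) a hf.continuousOn
    (ae_restrict_of_forall_mem measurableSet_Ioc fun t ht => hM t (Ioc_subset_Icc_self ht))
    (hasFiniteIntegral_const M)

lemma cfc_intervalIntegral {a : A} (ha : IsSelfAdjoint a) {f : ℝ → ℝ → ℝ}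
    (hf : Continuous (uncurry f)) {α β : ℝ} (hαβ : α ≤ β) :
    cfc (fun x => ∫ t in α..β, f t x) a = ∫ t in α..β, cfc (f t) a := by
  obtain ⟨M, hM⟩ := exists_bound_uncurry_Icc_spectrum a hf α β
  simp only [intervalIntegral.integral_of_le hαβ]
  exact cfc_setIntegral measurableSet_Ioc f (fun _ => M) a hf.continuousOn
    (ae_restrict_of_forall_mem measurableSet_Ioc fun t ht => hM t (Ioc_subset_Icc_self ht))
    (hasFiniteIntegral_const M)

lemma mul_intervalIntegral_mul {F : ℝ → A} {α β : ℝ} (hF : IntervalIntegrable F volume α β)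
    (P Q : A) : P * (∫ t in α..β, F t) * Q = ∫ t in α..β, P * F t * Q :=
  (((ContinuousLinearMap.mul ℝ A).flip Q).comp (ContinuousLinearMap.mul ℝ A P)
    |>.intervalIntegral_comp_comm hF).symm

lemma mul_cfc_intervalIntegral_mul_eq {a b P : A} (ha : IsSelfAdjoint a) (hb : IsSelfAdjoint b)
    {f : ℝ → ℝ → ℝ} (hf : Continuous (uncurry f)) {α β : ℝ} (hαβ : α ≤ β)
    (h : ∀ t ∈ Icc α β, P * cfc (f t) a * P = P * cfc (f t) b * P) :
    P * cfc (fun x => ∫ t in α..β, f t x) a * P = P * cfc (fun x => ∫ t in α..β, f t x) b * P := by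
  rw [cfc_intervalIntegral ha hf hαβ, cfc_intervalIntegral hb hf hαβ,
    mul_intervalIntegral_mul (intervalIntegrable_cfc ha hf hαβ),
    mul_intervalIntegral_mul (intervalIntegrable_cfc hb hf hαβ)]
  exact intervalIntegral.integral_congr fun t ht => h t (uIcc_of_le hαβ ▸ ht)

end CStarAlgebra

theorem statement12_general {E : Type*} [NormedAddCommGroup E] [InnerProductSpace ℂ E]
    [CompleteSpace E] (H₁ H₂ P : E →L[ℂ] E)
    (hH₁ : IsSelfAdjoint H₁) (hH₂ : IsSelfAdjoint H₂) (hP : IsSelfAdjoint P)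
    (ρ : ℝ) (hρ : 0 < ρ)
    (hagree : ∀ t : ℝ, |t| ≤ ρ → ∀ φ : E,
      cfc (fun x : ℝ => Real.cos (t * Real.sqrt x)) H₁ (P φ) =
      cfc (fun x : ℝ => Real.cos (t * Real.sqrt x)) H₂ (P φ)) :
    (∀ t : ℝ, |t| ≤ ρ →
      P ∘L cfc (fun x : ℝ => Real.cos (2 * t * Real.sqrt x)) H₁ ∘L P =
      P ∘L cfc (fun x : ℝ => Real.cos (2 * t * Real.sqrt x)) H₂ ∘L P) ∧
    (∀ Ψ Ψt : ℝ → ℝ, Continuous Ψ → (∀ u : ℝ, Ψ (-u) = Ψ u) → Continuous Ψt →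
      (∀ t : ℝ, 2 * ρ < |t| → Ψt t = 0) →
      (∀ l : ℝ, 0 ≤ l →
        Ψ l = (2 * Real.pi) ^ (-(1:ℝ)/2) * ∫ t in (-(2*ρ))..(2*ρ), Ψt t * Real.cos (t * l)) →
      P ∘L cfc (fun x : ℝ => Ψ (Real.sqrt x)) H₁ ∘L P =
      P ∘L cfc (fun x : ℝ => Ψ (Real.sqrt x)) H₂ ∘L P) := by
  simp only [← ContinuousLinearMap.mul_def, ← mul_assoc]
  have doubling (t : ℝ) (ht : |t| ≤ ρ) :
      P * cfc (fun x => Real.cos (2 * (t * √x))) H₁ * P =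
        P * cfc (fun x => Real.cos (2 * (t * √x))) H₂ * P :=
    mul_cfc_cos_two_mul_mul_eq hH₁ hH₂ hP (by fun_prop) (by ext φ; exact hagree t ht φ)
  refine ⟨fun t ht => by simpa only [mul_assoc] using doubling t ht, ?_⟩
  intro Ψ Ψt _ _ hΨt _ hrep
  set w : ℝ → ℝ := fun t => (2 * Real.pi) ^ (-(1:ℝ)/2) * Ψt t
  have hΨ : (fun x => Ψ √x) = fun x => ∫ t in (-(2*ρ))..(2*ρ), w t * Real.cos (t * √x) := by
    ext x
    simp only [hrep √x (Real.sqrt_nonneg x), w, mul_assoc, intervalIntegral.integral_const_mul]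
  rw [hΨ]
  refine mul_cfc_intervalIntegral_mul_eq hH₁ hH₂ (by fun_prop) (by linarith) fun s hs => ?_
  have hs' : |s / 2| ≤ ρ := by rw [abs_le]; constructor <;> linarith [hs.1, hs.2]
  have := doubling (s / 2) hs'
  simp only [← mul_assoc, mul_div_cancel₀ s two_ne_zero] at this
  rw [cfc_const_mul _ _ H₁, cfc_const_mul _ _ H₂, mul_smul_comm, smul_mul_assoc, mul_smul_comm,
    smul_mul_assoc, this]

/-- If the wave propagators of two positive self-adjoint operators agree on the range of a
self-adjoint projection `P` (multiplication by `1_A`) for `|t| ≤ ρ`, i.e.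
`cos(tH₁^{1/2})(Pφ) = cos(tH₂^{1/2})(Pφ)`, then `P cos(2tH₁^{1/2}) P = P cos(2tH₂^{1/2}) P`
for `|t| ≤ ρ`, and `P Ψ(H₁^{1/2}) P = P Ψ(H₂^{1/2}) P` for every even bounded function `Ψ`
whose Fourier transform is supported in `[-2ρ, 2ρ]`, i.e. such that
`Ψ(λ) = (2π)^{-1/2} ∫_{-2ρ}^{2ρ} Ψ̃(t) cos(tλ) dt` for `λ ≥ 0`. -/
theorem statement12 {E : Type*} [NormedAddCommGroup E] [InnerProductSpace ℂ E]
    [CompleteSpace E] (H₁ H₂ P : E →L[ℂ] E)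
    (hH₁ : IsSelfAdjoint H₁) (hH₂ : IsSelfAdjoint H₂) (hP : IsSelfAdjoint P)
    (hPidem : P ∘L P = P)
    (hH₁pos : ∀ x : E, 0 ≤ (⟪H₁ x, x⟫_ℂ).re) (hH₂pos : ∀ x : E, 0 ≤ (⟪H₂ x, x⟫_ℂ).re)
    (ρ : ℝ) (hρ : 0 < ρ)
    (hagree : ∀ t : ℝ, |t| ≤ ρ → ∀ φ : E,
      cfc (fun x : ℝ => Real.cos (t * Real.sqrt x)) H₁ (P φ) =
      cfc (fun x : ℝ => Real.cos (t * Real.sqrt x)) H₂ (P φ)) :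
    (∀ t : ℝ, |t| ≤ ρ →
      P ∘L cfc (fun x : ℝ => Real.cos (2 * t * Real.sqrt x)) H₁ ∘L P =
      P ∘L cfc (fun x : ℝ => Real.cos (2 * t * Real.sqrt x)) H₂ ∘L P) ∧
    (∀ Ψ Ψt : ℝ → ℝ, Continuous Ψ → (∀ u : ℝ, Ψ (-u) = Ψ u) → Continuous Ψt →
      (∀ t : ℝ, 2 * ρ < |t| → Ψt t = 0) →
      (∀ l : ℝ, 0 ≤ l →
        Ψ l = (2 * Real.pi) ^ (-(1:ℝ)/2) * ∫ t in (-(2*ρ))..(2*ρ), Ψt t * Real.cos (t * l)) →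
      P ∘L cfc (fun x : ℝ => Ψ (Real.sqrt x)) H₁ ∘L P =
      P ∘L cfc (fun x : ℝ => Ψ (Real.sqrt x)) H₂ ∘L P) :=
  statement12_general H₁ H₂ P hH₁ hH₂ hP ρ hρ hagree
end
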